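/- arXiv:2101.04368 — 2 statements merged into one kernel-verified Lean document; each statement's English description precedes it below -/
import Mathlib

section
/- Let f be a function with values in n×n complex matrices, holomorphic in a neighborhood of 0 in ℂ, such that f(ζ) is a symmetric matrix for every ζ in this neighborhood, f(0) = 0, and f′(0) = Id. Then there exists ε > 0 such that for every τ ∈ (0, ε), the matrix f(iτ) is invertible and the real matrix Im(−f(iτ)⁻¹) is symmetric positive definite. -/
/-!
Write `f (iτ) = iτ • g τ`. Since `f 0 = 0` and `f' 0 = 1`, `g τ → 1` as `τ → 0⁺`, hence
`(g τ)⁻¹ → 1` and `-(f (iτ))⁻¹ = (i / τ) • (g τ)⁻¹` has imaginary part `τ⁻¹ • Re (g τ)⁻¹`.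
This real matrix is symmetric because `f` is symmetric-valued, and it is positive definite once
it lies within distance `1` of the identity in operator norm.
-/

open Filter Matrix Topology

namespace Matrix

section PosDef

open scoped Norms.L2Operator ComplexOrder

variable {n 𝕜 : Type*} [Fintype n] [DecidableEq n] [RCLike 𝕜]

theorem posDef_of_isHermitian_of_norm_sub_one_lt {A : Matrix n n 𝕜} (hA : A.IsHermitian)
    (h : ‖A - 1‖ < 1) : A.PosDef := by
  refine .of_dotProduct_mulVec_pos hA fun x hx => ?_
  set v : EuclideanSpace 𝕜 n := WithLp.toLp 2 x
  set e : 𝕜 := star x ⬝ᵥ ((A - 1) *ᵥ x) with he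
  have hv : 0 < ‖v‖ := norm_pos_iff.2 (by simpa [v] using hx)
  have hsplit : star x ⬝ᵥ (A *ᵥ x) = (‖v‖ ^ 2 : 𝕜) + e := by
    rw [← inner_self_eq_norm_sq_to_K, EuclideanSpace.inner_toLp_toLp, dotProduct_comm x, he,
      sub_mulVec, dotProduct_sub, one_mulVec, add_sub_cancel]
  have herr : ‖e‖ ≤ ‖A - 1‖ * ‖v‖ ^ 2 := by
    calc ‖e‖ = ‖inner 𝕜 v (WithLp.toLp 2 ((A - 1) *ᵥ x))‖ := by
          rw [EuclideanSpace.inner_toLp_toLp, dotProduct_comm]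
      _ ≤ ‖v‖ * (‖A - 1‖ * ‖v‖) :=
          (norm_inner_le_norm _ _).trans (by gcongr; exact l2_opNorm_mulVec _ v)
      _ = ‖A - 1‖ * ‖v‖ ^ 2 := by ring
  refine RCLike.pos_iff.2 ⟨?_, hA.im_star_dotProduct_mulVec_self x⟩
  rw [hsplit, map_add, ← RCLike.ofReal_pow, RCLike.ofReal_re]
  nlinarith [neg_abs_le (RCLike.re e), RCLike.abs_re_le_norm e, sq_pos_of_pos hv]

theorem eventually_posDef_of_tendsto_one {α : Type*} {l : Filter α} {R : α → Matrix n n 𝕜}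
    (hR : Tendsto R l (𝓝 1)) (hherm : ∀ᶠ a in l, (R a).IsHermitian) :
    ∀ᶠ a in l, (R a).PosDef := by
  filter_upwards [hherm, hR (Metric.ball_mem_nhds 1 one_pos)] with a ha hball
  rw [Set.mem_preimage, Metric.mem_ball, dist_eq_norm] at hball
  exact posDef_of_isHermitian_of_norm_sub_one_lt ha hball

end PosDef

theorem tendsto_inv_smul_of_hasDerivAt_apply {𝕜 m n : Type*} [NontriviallyNormedField 𝕜]
    {f : 𝕜 → Matrix m n 𝕜} {A : Matrix m n 𝕜} (h0 : f 0 = 0)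
    (hf : ∀ i j, HasDerivAt (fun z => f z i j) (A i j) 0) :
    Tendsto (fun z => z⁻¹ • f z) (𝓝[≠] 0) (𝓝 A) := by
  refine tendsto_pi_nhds.2 fun i => tendsto_pi_nhds.2 fun j => ?_
  refine (hasDerivAt_iff_tendsto_slope.1 (hf i j)).congr fun z => ?_
  simp [slope_def_field, h0, div_eq_inv_mul]

variable {n : Type*} [Fintype n] [DecidableEq n]

theorem tendsto_map_re_inv_of_tendsto_one {α : Type*} {l : Filter α} {M : α → Matrix n n ℂ}
    (hM : Tendsto M l (𝓝 1)) : Tendsto (fun a => (M a)⁻¹.map Complex.re) l (𝓝 1) := by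
  have hinv : ContinuousAt Inv.inv (1 : Matrix n n ℂ) :=
    continuousAt_matrix_inv _
      (by simpa only [det_one, Ring.inverse_eq_inv'] using continuousAt_inv₀ one_ne_zero)
  have hre : Continuous fun M : Matrix n n ℂ => M.map Complex.re :=
    continuous_id.matrix_map Complex.continuous_re
  have := (hre.tendsto _).comp (hinv.tendsto.comp hM)
  rwa [inv_one, Matrix.map_one _ Complex.zero_re Complex.one_re] at this

theorem posDef_map_im_neg_inv_ofReal_mul_I_smul {τ : ℝ} (hτ : 0 < τ) {B : Matrix n n ℂ}
    (hB : IsUnit B.det) (hpos : (B⁻¹.map Complex.re).PosDef) :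
    ((-(((τ : ℂ) * Complex.I) • B)⁻¹).map Complex.im).PosDef := by
  have hc : (τ : ℂ) * Complex.I ≠ 0 :=
    mul_ne_zero (Complex.ofReal_ne_zero.2 hτ.ne') Complex.I_ne_zero
  have hinv : (((τ : ℂ) * Complex.I) • B)⁻¹ = ((τ : ℂ) * Complex.I)⁻¹ • B⁻¹ := by
    have := inv_smul' B (Units.mk0 _ hc) hB
    rwa [Units.smul_def, Units.smul_def, Units.val_inv_eq_inv_val, Units.val_mk0] at this
  have him : (-(((τ : ℂ) * Complex.I) • B)⁻¹).map Complex.im = τ⁻¹ • B⁻¹.map Complex.re := by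
    ext j k
    simp [hinv]
  rw [him]
  exact hpos.smul (inv_pos.2 hτ)

end Matrix

theorem Complex.tendsto_ofReal_mul_I_nhdsGT_zero :
    Tendsto (fun τ : ℝ => (τ : ℂ) * I) (𝓝[>] 0) (𝓝[≠] 0) := by
  refine tendsto_nhdsWithin_iff.2 ⟨?_, ?_⟩
  · exact ((by fun_prop : Continuous fun τ : ℝ => (τ : ℂ) * I).tendsto' 0 0 (by simp)).mono_left
      nhdsWithin_le_nhds
  · filter_upwards [self_mem_nhdsWithin] with τ hτ
    exact mul_ne_zero (ofReal_ne_zero.2 hτ.ne') I_ne_zero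

theorem im_neg_inv_posDef_of_deriv_id_general {n : ℕ} (U : Set ℂ) (hU : U ∈ nhds (0 : ℂ))
    (f : ℂ → Matrix (Fin n) (Fin n) ℂ)
    (hsymm : ∀ ζ ∈ U, (f ζ)ᵀ = f ζ)
    (h0 : f 0 = 0)
    (hderiv : ∀ j k, HasDerivAt (fun z => f z j k)
      ((1 : Matrix (Fin n) (Fin n) ℂ) j k) 0) :
    ∃ ε > 0, ∀ τ : ℝ, τ ∈ Set.Ioo 0 ε →
      IsUnit (f (τ * Complex.I)) ∧
      (Matrix.of fun j k => ((-(f (τ * Complex.I))⁻¹) j k).im).PosDef := by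
  set g : ℝ → Matrix (Fin n) (Fin n) ℂ := fun τ => ((τ : ℂ) * Complex.I)⁻¹ • f (τ * Complex.I)
  have hray := Complex.tendsto_ofReal_mul_I_nhdsGT_zero
  have hg : Tendsto g (𝓝[>] 0) (𝓝 1) := (tendsto_inv_smul_of_hasDerivAt_apply h0 hderiv).comp hray
  have hmem : ∀ᶠ τ : ℝ in 𝓝[>] 0, (τ : ℂ) * Complex.I ∈ U := hray.mono_right nhdsWithin_le_nhds hU
  have hdet : ∀ᶠ τ in 𝓝[>] 0, (g τ).det ≠ 0 :=
    ((continuous_id.matrix_det.tendsto 1).comp hg).eventually_ne (by simp)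
  have hpos : ∀ᶠ τ in 𝓝[>] 0, ((g τ)⁻¹.map Complex.re).PosDef :=
    eventually_posDef_of_tendsto_one (tendsto_map_re_inv_of_tendsto_one hg)
      (hmem.mono fun τ hτ => isHermitian_iff_isSymm.2 ((IsSymm.smul (hsymm _ hτ) _).inv.map _))
  obtain ⟨ε, hε, hsub⟩ :=
    mem_nhdsGT_iff_exists_Ioo_subset.1 (eventually_mem_nhdsWithin.and (hdet.and hpos))
  refine ⟨ε, hε, fun τ hτ => ?_⟩
  obtain ⟨hτ0, hdetτ, hposτ⟩ := hsub hτ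
  have hc : (τ : ℂ) * Complex.I ≠ 0 :=
    mul_ne_zero (Complex.ofReal_ne_zero.2 hτ0.ne') Complex.I_ne_zero
  rw [← smul_inv_smul₀ hc (f _)]
  refine ⟨(isUnit_iff_isUnit_det _).2 ?_,
    posDef_map_im_neg_inv_ofReal_mul_I_smul hτ0 hdetτ.isUnit hposτ⟩
  rw [det_smul]
  exact (hc.isUnit.pow _).mul hdetτ.isUnit

/-- Key step of Lemma 4.6: if `f` is a matrix-valued function, holomorphic near `0`,
symmetric-valued, with `f 0 = 0` and `f' 0 = Id`, then for all small `τ > 0` the matrix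
`f (iτ)` is invertible and `Im (-(f (iτ))⁻¹)` is symmetric positive definite. -/
theorem im_neg_inv_posDef_of_deriv_id {n : ℕ} (U : Set ℂ) (hU : U ∈ nhds (0 : ℂ))
    (f : ℂ → Matrix (Fin n) (Fin n) ℂ)
    (hol : ∀ ζ ∈ U, ∀ j k, DifferentiableAt ℂ (fun z => f z j k) ζ)
    (hsymm : ∀ ζ ∈ U, (f ζ)ᵀ = f ζ)
    (h0 : f 0 = 0)
    (hderiv : ∀ j k, HasDerivAt (fun z => f z j k)
      ((1 : Matrix (Fin n) (Fin n) ℂ) j k) 0) :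
    ∃ ε > 0, ∀ τ : ℝ, τ ∈ Set.Ioo 0 ε →
      IsUnit (f (τ * Complex.I)) ∧
      (Matrix.of fun j k => ((-(f (τ * Complex.I))⁻¹) j k).im).PosDef :=
  im_neg_inv_posDef_of_deriv_id_general U hU f hsymm h0 hderiv
end

section
/- Let f be a function with values in m×m complex matrices, holomorphic in a neighborhood of 0 in ℂ, such that f(ζ) is a symmetric matrix for every ζ in this neighborhood, f(0) = 0, and f′(0) = Id. Then lim_{δ→0⁺} lim_{τ→0⁺} ∫_{−δ}^{δ} Im(−f(σ+iτ)⁻¹) dσ = π·Id, where the integral is taken entrywise (for δ and τ sufficiently small the matrix f(σ+iτ) is invertible so the integrand is defined). -/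
/-! Two divided differences at `0` give `f ζ = ζ • (1 + ζ • Q ζ)` with `Q` holomorphic, so near
`0` we have `-(f ζ)⁻¹ = -ζ⁻¹ • 1 + K ζ` with `K = (1 + ζ • Q)⁻¹ * Q` continuous. On the line
`ζ = σ + iτ` the imaginary part of `-ζ⁻¹` is the Poisson kernel `τ / (σ² + τ²)`, whose integral
over `[-δ, δ]` is `2 arctan (δ / τ) → π` as `τ → 0⁺`. The continuous part tends to
`∫_{-δ}^{δ} Im K(σ) dσ` by dominated convergence, and this is `O(δ)`. -/

open Filter Matrix MeasureTheory

open Complex Metric Set Topology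
open scoped Real

lemma im_neg_inv_ofReal_add_mul_I (σ τ : ℝ) :
    (-((σ : ℂ) + τ * I)⁻¹).im = τ / (σ ^ 2 + τ ^ 2) := by
  simp [Complex.normSq_apply, sq, neg_div]

lemma setIntegral_Icc_div_sq_add_sq {δ τ : ℝ} (hδ : 0 ≤ δ) (hτ : 0 < τ) :
    ∫ σ in Icc (-δ) δ, τ / (σ ^ 2 + τ ^ 2) = 2 * Real.arctan (δ / τ) := by
  have h : ∀ σ : ℝ, τ / (σ ^ 2 + τ ^ 2) = τ⁻¹ * (1 + (σ / τ) ^ 2)⁻¹ := fun σ => by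
    field_simp
    ring
  rw [integral_Icc_eq_integral_Ioc, ← intervalIntegral.integral_of_le (by linarith)]
  simp_rw [h]
  rw [intervalIntegral.integral_const_mul, intervalIntegral.inv_mul_integral_comp_div
    (f := fun x => (1 + x ^ 2)⁻¹), integral_inv_one_add_sq, neg_div, Real.arctan_neg]
  ring

lemma tendsto_setIntegral_Icc_im_neg_inv {δ : ℝ} (hδ : 0 < δ) :
    Tendsto (fun τ : ℝ => ∫ σ in Icc (-δ) δ, (-((σ : ℂ) + τ * I)⁻¹).im) (𝓝[>] 0) (𝓝 π) := by
  have h_arctan : Tendsto (fun τ : ℝ => 2 * Real.arctan (δ / τ)) (𝓝[>] 0) (𝓝 π) := by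
    have h := ((tendsto_nhds_of_tendsto_nhdsWithin Real.tendsto_arctan_atTop).comp
      (tendsto_inv_nhdsGT_zero.const_mul_atTop hδ)).const_mul 2
    rw [mul_div_cancel₀ _ two_ne_zero] at h
    simpa [div_eq_mul_inv] using h
  refine h_arctan.congr' ?_
  filter_upwards [self_mem_nhdsWithin] with τ hτ
  simp_rw [im_neg_inv_ofReal_add_mul_I]
  exact (setIntegral_Icc_div_sq_add_sq hδ.le hτ).symm

lemma ofReal_add_mul_I_mem_closedBall {σ τ δ η : ℝ} (hσ : σ ∈ Icc (-δ) δ) (hτ : |τ| ≤ η - δ) :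
    (σ : ℂ) + τ * I ∈ closedBall (0 : ℂ) η := by
  have h := Complex.norm_le_abs_re_add_abs_im ((σ : ℂ) + τ * I)
  simp only [add_re, ofReal_re, mul_re, I_re, mul_zero, ofReal_im, I_im, mul_one, sub_self,
    add_zero, add_im, mul_im, zero_add] at h
  rw [mem_closedBall, dist_zero_right]
  linarith [abs_le.2 hσ]

section ContinuousOnClosedBall

variable {k : ℂ → ℝ} {η : ℝ}

lemma ContinuousOn.tendsto_setIntegral_Icc_ofReal_add_mul_I
    (hk : ContinuousOn k (closedBall 0 η)) {δ : ℝ} (hδη : δ < η) :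
    Tendsto (fun τ : ℝ => ∫ σ in Icc (-δ) δ, k (σ + τ * I)) (𝓝[>] 0)
      (𝓝 (∫ σ in Icc (-δ) δ, k σ)) := by
  obtain ⟨C, hC⟩ := (isCompact_closedBall (0 : ℂ) η).exists_bound_of_continuousOn hk
  have h_near : ∀ᶠ τ : ℝ in 𝓝[>] 0, |τ| ≤ η - δ := by
    refine nhdsWithin_le_nhds (mem_of_superset
      (closedBall_mem_nhds (0 : ℝ) (sub_pos.2 hδη)) fun τ hτ => ?_)
    simpa [Real.dist_eq] using hτ
  refine tendsto_integral_filter_of_dominated_convergence (fun _ => C) ?_ ?_ ?_ ?_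
  · filter_upwards [h_near] with τ hτ
    refine ContinuousOn.aestronglyMeasurable ?_ measurableSet_Icc
    exact hk.comp (by fun_prop) fun σ hσ => ofReal_add_mul_I_mem_closedBall hσ hτ
  · filter_upwards [h_near] with τ hτ
    exact (ae_restrict_iff' measurableSet_Icc).2 (Eventually.of_forall fun σ hσ =>
      hC _ (ofReal_add_mul_I_mem_closedBall hσ hτ))
  · exact integrableOn_const measure_Icc_lt_top.ne
  · refine (ae_restrict_iff' measurableSet_Icc).2 (Eventually.of_forall fun σ hσ => ?_)
    have hση : (σ : ℂ) ∈ closedBall 0 η := by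
      simpa using ofReal_add_mul_I_mem_closedBall (τ := 0) hσ (by simpa using hδη.le)
    refine (hk _ hση).tendsto.comp (tendsto_nhdsWithin_iff.2 ⟨?_, ?_⟩)
    · exact ((by fun_prop : Continuous fun τ : ℝ => (σ : ℂ) + τ * I).tendsto' 0 σ
        (by simp)).mono_left nhdsWithin_le_nhds
    · filter_upwards [h_near] with τ hτ using ofReal_add_mul_I_mem_closedBall hσ hτ

lemma ContinuousOn.tendsto_setIntegral_Icc_neg_self (hk : ContinuousOn k (closedBall 0 η))
    (hη : 0 < η) :
    Tendsto (fun δ : ℝ => ∫ σ in Icc (-δ) δ, k σ) (𝓝[>] 0) (𝓝 0) := by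
  obtain ⟨C, hC⟩ := (isCompact_closedBall (0 : ℂ) η).exists_bound_of_continuousOn hk
  refine squeeze_zero_norm' (a := fun δ => C * (2 * δ)) ?_ ?_
  · filter_upwards [Ioo_mem_nhdsGT hη] with δ hδ
    have hbound : ∀ σ ∈ Icc (-δ) δ, ‖k σ‖ ≤ C := fun σ hσ => hC σ
      (by simpa using ofReal_add_mul_I_mem_closedBall (τ := 0) hσ (by simpa using hδ.2.le))
    have h := norm_setIntegral_le_of_norm_le_const (μ := volume) measure_Icc_lt_top hbound
    rwa [Real.volume_real_Icc_of_le (by linarith [hδ.1]), sub_neg_eq_add, ← two_mul] at h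
  · exact ((by fun_prop : Continuous fun δ : ℝ => C * (2 * δ)).tendsto' 0 0
      (by simp)).mono_left nhdsWithin_le_nhds

lemma ContinuousOn.tendsto_setIntegral_Icc_of_eq_im_neg_inv_mul_add
    (hk : ContinuousOn k (closedBall 0 η)) {F : ℂ → ℝ} {c : ℝ}
    (hF : ∀ z ∈ closedBall (0 : ℂ) η, z ≠ 0 → F z = (-z⁻¹).im * c + k z)
    {δ : ℝ} (hδ : 0 < δ) (hδη : δ < η) :
    Tendsto (fun τ : ℝ => ∫ σ in Icc (-δ) δ, F (σ + τ * I)) (𝓝[>] 0)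
      (𝓝 (π * c + ∫ σ in Icc (-δ) δ, k σ)) := by
  refine (((tendsto_setIntegral_Icc_im_neg_inv hδ).mul_const c).add
    (hk.tendsto_setIntegral_Icc_ofReal_add_mul_I hδη)).congr' ?_
  filter_upwards [Ioo_mem_nhdsGT (sub_pos.2 hδη)] with τ hτ
  have habs : |τ| ≤ η - δ := (abs_of_pos hτ.1).trans_le hτ.2.le
  have hne : ∀ σ : ℝ, (σ : ℂ) + τ * I ≠ 0 := fun σ h => hτ.1.ne' (by simpa using congrArg im h)
  have h_pole : IntegrableOn (fun σ : ℝ => (-((σ : ℂ) + τ * I)⁻¹).im * c) (Icc (-δ) δ) :=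
    (continuous_im.comp ((by fun_prop : Continuous fun σ : ℝ => (σ : ℂ) + τ * I).inv₀
      hne).neg |>.mul_const c).integrableOn_Icc
  have h_reg : IntegrableOn (fun σ : ℝ => k (σ + τ * I)) (Icc (-δ) δ) :=
    (hk.comp (by fun_prop) fun σ hσ => ofReal_add_mul_I_mem_closedBall hσ habs).integrableOn_Icc
  rw [← integral_mul_const, ← integral_add h_pole h_reg]
  exact setIntegral_congr_fun measurableSet_Icc fun σ hσ =>
    (hF _ (ofReal_add_mul_I_mem_closedBall hσ habs) (hne σ)).symm

end ContinuousOnClosedBall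

lemma eq_smul_deriv_add_smul_dslope_dslope {𝕜 E : Type*} [NontriviallyNormedField 𝕜]
    [NormedAddCommGroup E] [NormedSpace 𝕜 E] {f : 𝕜 → E} (h0 : f 0 = 0) (z : 𝕜) :
    f z = z • (deriv f 0 + z • dslope (dslope f 0) 0 z) := by
  have h1 := sub_smul_dslope f 0 z
  have h2 := sub_smul_dslope (dslope f 0) 0 z
  rw [sub_zero, h0, sub_zero] at h1
  rw [sub_zero, dslope_same] at h2
  rw [h2, add_sub_cancel, h1]

lemma Matrix.inv_smul_one_add_smul {n K : Type*} [Fintype n] [DecidableEq n] [Field K]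
    {z : K} (hz : z ≠ 0) {Q : Matrix n n K} (hdet : IsUnit (1 + z • Q).det) :
    (z • (1 + z • Q))⁻¹ = z⁻¹ • 1 - (1 + z • Q)⁻¹ * Q := by
  refine Matrix.inv_eq_right_inv ?_
  rw [Matrix.mul_sub, Matrix.smul_mul, Matrix.mul_smul, Matrix.mul_one, Matrix.smul_mul,
    ← Matrix.mul_assoc, Matrix.mul_nonsing_inv _ hdet, Matrix.one_mul, smul_smul,
    mul_inv_cancel₀ hz, one_smul, add_sub_cancel_right]

section MatrixNorm

attribute [local instance] Matrix.normedAddCommGroup Matrix.normedSpace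

lemma exists_neg_inv_eq_neg_inv_smul_one_add {n : Type*} [Fintype n] [DecidableEq n]
    {f : ℂ → Matrix n n ℂ} (hf : ∀ᶠ z in 𝓝 0, ∀ j k, DifferentiableAt ℂ (fun w => f w j k) z)
    (h0 : f 0 = 0) (h1 : ∀ j k, HasDerivAt (fun w => f w j k) ((1 : Matrix n n ℂ) j k) 0) :
    ∃ η > 0, ∃ K : ℂ → Matrix n n ℂ, ContinuousOn K (closedBall 0 η) ∧
      ∀ z ∈ closedBall (0 : ℂ) η, z ≠ 0 → -(f z)⁻¹ = -z⁻¹ • 1 + K z := by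
  replace hf : ∀ᶠ z in 𝓝 0, DifferentiableAt ℂ f z := hf.mono fun z hz =>
    differentiableAt_pi.2 fun j => differentiableAt_pi.2 (hz j)
  replace h1 : HasDerivAt f 1 0 := hasDerivAt_pi.2 fun j => hasDerivAt_pi.2 (h1 j)
  set Q := dslope (dslope f 0) 0
  set s := interior {z | DifferentiableAt ℂ f z}
  have hs : s ∈ 𝓝 0 := interior_mem_nhds.2 hf
  have hQ : ∀ᶠ z in 𝓝 0, ContinuousAt Q z := by
    have hd : DifferentiableOn ℂ Q s :=
      (Complex.differentiableOn_dslope hs).2 <| (Complex.differentiableOn_dslope hs).2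
        fun z hz =>
          (interior_subset (s := {z | DifferentiableAt ℂ f z}) hz).differentiableWithinAt
    filter_upwards [hs] with z hz using
      (hd.differentiableAt (isOpen_interior.mem_nhds hz)).continuousAt
  have hG : ∀ᶠ z in 𝓝 0, IsUnit (1 + z • Q z).det := by
    have hc : ContinuousAt (fun z => (1 + z • Q z).det) 0 :=
      (continuous_id.matrix_det).continuousAt.comp
        (continuousAt_const.add (continuousAt_id.smul hQ.self_of_nhds))
    filter_upwards [hc.eventually_ne (by simp : (1 + (0 : ℂ) • Q 0).det ≠ 0)] with z hz
      using isUnit_iff_ne_zero.2 hz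
  obtain ⟨r, hr, hball⟩ := Metric.eventually_nhds_iff_ball.1 (hQ.and hG)
  refine ⟨r / 2, half_pos hr, fun z => (1 + z • Q z)⁻¹ * Q z, fun z hz => ?_, fun z hz hz0 => ?_⟩
  · obtain ⟨hQz, hGz⟩ := hball z (closedBall_subset_ball (half_lt_self hr) hz)
    have hGc : ContinuousAt (fun w => 1 + w • Q w) z :=
      continuousAt_const.add (continuousAt_id.smul hQz)
    exact (((continuousAt_matrix_inv _ (NormedRing.inverse_continuousAt hGz.unit)).comp
      (f := fun w => 1 + w • Q w) hGc).mul hQz).continuousWithinAt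
  · obtain ⟨-, hGz⟩ := hball z (closedBall_subset_ball (half_lt_self hr) hz)
    rw [eq_smul_deriv_add_smul_dslope_dslope h0 z, h1.deriv,
      Matrix.inv_smul_one_add_smul hz0 hGz, neg_sub, neg_smul]
    abel

end MatrixNorm

theorem lim_lim_int_im_neg_inv_eq_pi_smul_id_general {m : ℕ} (U : Set ℂ) (hU : U ∈ nhds (0 : ℂ))
    (f : ℂ → Matrix (Fin m) (Fin m) ℂ)
    (hol : ∀ ζ ∈ U, ∀ j k, DifferentiableAt ℂ (fun z => f z j k) ζ)
    (h0 : f 0 = 0)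
    (hderiv : ∀ j k, HasDerivAt (fun z => f z j k)
      ((1 : Matrix (Fin m) (Fin m) ℂ) j k) 0) :
    ∃ L : ℝ → Matrix (Fin m) (Fin m) ℝ,
      (∀ᶠ δ in nhdsWithin (0 : ℝ) (Set.Ioi 0),
        Tendsto
          (fun τ : ℝ => Matrix.of fun j k =>
            ∫ σ : ℝ in Set.Icc (-δ) δ, ((-(f ((σ : ℂ) + τ * Complex.I))⁻¹) j k).im)
          (nhdsWithin (0 : ℝ) (Set.Ioi 0)) (nhds (L δ))) ∧
      Tendsto L (nhdsWithin (0 : ℝ) (Set.Ioi 0))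
        (nhds (Real.pi • (1 : Matrix (Fin m) (Fin m) ℝ))) := by
  obtain ⟨η, hη, K, hK, hfK⟩ := exists_neg_inv_eq_neg_inv_smul_one_add
    (mem_of_superset hU hol) h0 hderiv
  have hK_im : ∀ j k, ContinuousOn (fun z => (K z j k).im) (closedBall 0 η) := fun j k =>
    (continuous_im.comp (continuous_id.matrix_elem j k)).comp_continuousOn hK
  refine ⟨fun δ => π • 1 + of fun j k => ∫ σ in Icc (-δ) δ, (K σ j k).im, ?_, ?_⟩
  · filter_upwards [Ioo_mem_nhdsGT hη] with δ hδ
    refine tendsto_pi_nhds.2 fun j => tendsto_pi_nhds.2 fun k => ?_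
    have hF : ∀ z ∈ closedBall (0 : ℂ) η, z ≠ 0 →
        ((-(f z)⁻¹) j k).im = (-z⁻¹).im * (1 : Matrix (Fin m) (Fin m) ℝ) j k + (K z j k).im := by
      intro z hz hz0
      rw [hfK z hz hz0]
      rcases eq_or_ne j k with rfl | hjk <;> simp [*]
    simpa using (hK_im j k).tendsto_setIntegral_Icc_of_eq_im_neg_inv_mul_add hF hδ.1 hδ.2
  · have h_reg : Tendsto (fun δ : ℝ => of fun j k => ∫ σ in Icc (-δ) δ, (K σ j k).im)
        (𝓝[>] 0) (𝓝 0) := tendsto_pi_nhds.2 fun j => tendsto_pi_nhds.2 fun k =>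
      (hK_im j k).tendsto_setIntegral_Icc_neg_self hη
    simpa using tendsto_const_nhds.add h_reg

/-- Lemma 4.9 (abstracted): if `f` is a matrix-valued function, holomorphic near `0`,
symmetric-valued, with `f 0 = 0` and `f' 0 = Id`, then
`lim_{δ→0⁺} lim_{τ→0⁺} ∫_{-δ}^{δ} Im (-(f (σ + iτ))⁻¹) dσ = π • Id`
(entrywise integrals). -/
theorem lim_lim_int_im_neg_inv_eq_pi_smul_id {m : ℕ} (U : Set ℂ) (hU : U ∈ nhds (0 : ℂ))
    (f : ℂ → Matrix (Fin m) (Fin m) ℂ)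
    (hol : ∀ ζ ∈ U, ∀ j k, DifferentiableAt ℂ (fun z => f z j k) ζ)
    (hsymm : ∀ ζ ∈ U, (f ζ)ᵀ = f ζ)
    (h0 : f 0 = 0)
    (hderiv : ∀ j k, HasDerivAt (fun z => f z j k)
      ((1 : Matrix (Fin m) (Fin m) ℂ) j k) 0) :
    ∃ L : ℝ → Matrix (Fin m) (Fin m) ℝ,
      (∀ᶠ δ in nhdsWithin (0 : ℝ) (Set.Ioi 0),
        Tendsto
          (fun τ : ℝ => Matrix.of fun j k =>
            ∫ σ : ℝ in Set.Icc (-δ) δ, ((-(f ((σ : ℂ) + τ * Complex.I))⁻¹) j k).im)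
          (nhdsWithin (0 : ℝ) (Set.Ioi 0)) (nhds (L δ))) ∧
      Tendsto L (nhdsWithin (0 : ℝ) (Set.Ioi 0))
        (nhds (Real.pi • (1 : Matrix (Fin m) (Fin m) ℝ))) :=
  lim_lim_int_im_neg_inv_eq_pi_smul_id_general U hU f hol h0 hderiv
end
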